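/- arXiv:1402.1826 — 6 statements merged into one kernel-verified Lean document; each statement's English description precedes it below -/
import Mathlib

section
/- Let n ≥ 7 be an odd integer with d = φ(n) and suppose 2d ≥ n + 5. Let α be the action of ℤ_n = ⟨C_n⟩ on ℤ^d given by the companion matrix C_n of the n-th cyclotomic polynomial. Then there exists an odd l with 0 < l < d and a nonzero element of the l-th exterior power Λ^l ℤ^d that is fixed by Λ^l(C_n); equivalently, ∑_{l≥0} rank_ℤ((Λ^{2l+1}ℤ^d)^{ℤ_n}) > 0. -/
/-!
For a root `μ` of a monic `p` of degree `d`, the functional `y ↦ ∑ⱼ yⱼ μʲ` on `ℤ^d` is an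
eigenvector, with eigenvalue `μ`, of the transpose of the companion matrix `C` of `p`.
Counting the `b < n` with `b` and `b + 1` both prime to `n` gives three distinct exponents
`1, b, n - 1 - b` prime to `n` with sum `n`, so that `μₜ = ζ^{aₜ}` are roots of `Φₙ` with
`μ₀ μ₁ μ₂ = 1`. The determinant of the three functionals is an alternating form on `ℤ^d` sending
`Cᵏe₀ ∧ Cᵏe₁ ∧ Cᵏe₂` to `(μ₀ μ₁ μ₂)ᵏ` times a Vandermonde determinant, the same nonzero number for
every `k`. Hence the orbit sum `∑_{k<n} Λ³(Cᵏ)(e₀ ∧ e₁ ∧ e₂)`, which is fixed since `Cⁿ = 1`,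
is nonzero.
-/

/-- The companion matrix of a polynomial `p` viewed as a `d × d` matrix:
`1`'s on the subdiagonal, last column `(-a_0, …, -a_{d-1})ᵗ`, zeros elsewhere. -/
def companionMatrix (d : ℕ) (p : Polynomial ℤ) : Matrix (Fin d) (Fin d) ℤ :=
  Matrix.of fun i j =>
    if (j : ℕ) = d - 1 then -p.coeff (i : ℕ)
    else if (i : ℕ) = (j : ℕ) + 1 then 1 else 0

/-- The companion matrix of the `n`-th cyclotomic polynomial,
a `φ(n) × φ(n)` integer matrix. -/
noncomputable def cyclotomicCompanion (n : ℕ) :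
    Matrix (Fin (Nat.totient n)) (Fin (Nat.totient n)) ℤ :=
  companionMatrix (Nat.totient n) (Polynomial.cyclotomic n ℤ)

open Polynomial Finset Matrix

def detRowAlternatingComp {R S M ι : Type*} [CommRing R] [CommRing S] [Algebra R S]
    [AddCommGroup M] [Module R M] [Fintype ι] [DecidableEq ι] (φ : M →ₗ[R] ι → S) :
    M [⋀^ι]→ₗ[R] S where
  toMultilinearMap :=
    ((detRowAlternating (R := S)).toMultilinearMap.restrictScalars R).compLinearMap fun _ => φ
  map_eq_zero_of_eq' v i j hv hij := det_zero_of_row_eq hij (by simp [hv])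

theorem detRowAlternatingComp_apply {R S M ι : Type*} [CommRing R] [CommRing S] [Algebra R S]
    [AddCommGroup M] [Module R M] [Fintype ι] [DecidableEq ι] (φ : M →ₗ[R] ι → S) (v : ι → M) :
    detRowAlternatingComp φ v = (of fun i j => φ (v i) j).det :=
  rfl

theorem ExteriorAlgebra.toLinearMap_map_pow {R M : Type*} [CommRing R] [AddCommGroup M]
    [Module R M] (f : Module.End R M) (k : ℕ) :
    (ExteriorAlgebra.map (f ^ k)).toLinearMap = (ExteriorAlgebra.map f).toLinearMap ^ k := by
  induction k with
  | zero => simp [Module.End.one_eq_id]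
  | succ k ih =>
    rw [pow_succ, pow_succ, Module.End.mul_eq_comp, Module.End.mul_eq_comp, ← ih,
      ← ExteriorAlgebra.map_comp_map, AlgHom.comp_toLinearMap]

theorem pow_smul_sum_pow_smul_of_pow_eq_one {G A : Type*} [Monoid G] [AddCommMonoid A]
    [DistribMulAction G A] {g : G} {n : ℕ} (hg : g ^ n = 1) (a : A) (j : ℕ) :
    g ^ j • ∑ k ∈ range n, g ^ k • a = ∑ k ∈ range n, g ^ k • a := by
  have hfix : g • ∑ k ∈ range n, g ^ k • a = ∑ k ∈ range n, g ^ k • a := by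
    rw [smul_sum]
    simp_rw [← mul_smul, ← pow_succ']
    rcases n with _ | m
    · simp
    rw [sum_range_succ (fun k => g ^ (k + 1) • a), hg, sum_range_succ' (fun k => g ^ k • a),
      pow_zero]
  induction j with
  | zero => rw [pow_zero, one_smul]
  | succ j ih => rw [pow_succ', mul_smul, ih, hfix]

theorem card_filter_coprime_succ (n : ℕ) : #{b ∈ range n | n.Coprime (b + 1)} = n.totient := by
  rw [← Nat.filter_coprime_Ico_eq_totient n 1, add_comm 1 n, ← Nat.Ico_zero_eq_range,
    ← zero_add 1, ← Finset.map_add_right_Ico, Finset.filter_map, Finset.card_map]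
  rfl

theorem exists_coprime_and_coprime_succ_notMem {n : ℕ} (s : Finset ℕ)
    (h : n + #s < 2 * n.totient) : ∃ b < n, n.Coprime b ∧ n.Coprime (b + 1) ∧ b ∉ s := by
  set A := {b ∈ range n | n.Coprime b}
  set B := {b ∈ range n | n.Coprime (b + 1)}
  have hunion : #(A ∪ B) ≤ n := by
    simpa using card_le_card (union_subset (filter_subset _ (range n)) (filter_subset _ _))
  have hinter := card_inter_add_card_union A B
  rw [← Nat.totient_eq_card_coprime, card_filter_coprime_succ] at hinter
  obtain ⟨b, hb⟩ : ((A ∩ B) \ s).Nonempty := by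
    rw [← card_pos]
    have := le_card_sdiff s (A ∩ B)
    omega
  simp only [A, B, mem_sdiff, mem_inter, mem_filter, mem_range] at hb
  exact ⟨b, hb.1.1.1, hb.1.1.2, hb.1.2.2, hb.2⟩

theorem exists_injective_coprime_sum_eq {n : ℕ} (h : n + 4 ≤ 2 * n.totient) :
    ∃ a : Fin 3 → ℕ, Function.Injective a ∧ (∀ t, a t < n ∧ n.Coprime (a t)) ∧ ∑ t, a t = n := by
  -- the excluded values of `b` are those for which `1, b, n - 1 - b` are not distinct
  obtain ⟨b, hbn, hb, hb1, hbs⟩ :=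
    exists_coprime_and_coprime_succ_notMem {1, n - 2, (n - 1) / 2}
      (lt_of_le_of_lt (by grw [card_le_three]) (by omega : n + 3 < _))
  have hn1 : n ≠ 1 := by rintro rfl; simp at h
  have hb0 : b ≠ 0 := by rintro rfl; exact hn1 (Nat.coprime_zero_right n |>.mp hb)
  have hb1n : b + 1 ≠ n := by rintro rfl; exact hn1 ((Nat.coprime_self _).mp hb1)
  simp only [mem_insert, mem_singleton, not_or] at hbs
  refine ⟨![1, b, n - 1 - b], ?_, ?_, ?_⟩
  · intro i j hij
    fin_cases i <;> fin_cases j <;> simp at hij ⊢ <;> omega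
  · have hcop : n.Coprime (n - 1 - b) := by
      rwa [Nat.sub_sub, Nat.coprime_self_sub_right (by omega), add_comm]
    intro t
    fin_cases t
    exacts [⟨by simp; omega, Nat.coprime_one_right n⟩, ⟨hbn, hb⟩, ⟨by simp; omega, hcop⟩]
  · simp [Fin.sum_univ_three]; omega

section Companion

variable {d : ℕ} {p : ℤ[X]}

theorem Polynomial.Monic.aeval_eq_pow_add_sum {A : Type*} [Ring A] (hp : p.Monic)
    (hdeg : p.natDegree = d) (x : A) :
    aeval x p = x ^ d + ∑ i : Fin d, p.coeff i • x ^ (i : ℕ) := by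
  conv_lhs => rw [hp.as_sum, hdeg]
  simp [zsmul_eq_mul, Fin.sum_univ_eq_sum_range (fun i => (p.coeff i : A) * x ^ i)]

theorem companionMatrix_toLin'_single_of_lt (j : Fin d) (h : (j : ℕ) + 1 < d) :
    toLin' (companionMatrix d p) (Pi.single j 1) = Pi.single ⟨j + 1, h⟩ 1 := by
  ext i
  simp [companionMatrix, Pi.single_apply, Fin.ext_iff]
  omega

theorem companionMatrix_toLin'_single_last (j : Fin d) (h : (j : ℕ) + 1 = d) :
    toLin' (companionMatrix d p) (Pi.single j 1) = fun i : Fin d => -p.coeff i := by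
  ext i
  simp [companionMatrix, show (j : ℕ) = d - 1 by omega]

theorem companionMatrix_toLin'_pow_single_zero (hd : 0 < d) (j : Fin d) :
    (toLin' (companionMatrix d p) ^ (j : ℕ)) (Pi.single ⟨0, hd⟩ 1) = Pi.single j 1 := by
  obtain ⟨j, hj⟩ := j
  induction j with
  | zero => rfl
  | succ j ih =>
    rw [pow_succ', Module.End.mul_apply, ih (by omega), companionMatrix_toLin'_single_of_lt _ hj]

theorem aeval_companionMatrix_toLin'_self (hp : p.Monic) (hdeg : p.natDegree = d) :
    aeval (toLin' (companionMatrix d p)) p = 0 := by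
  set M := toLin' (companionMatrix d p)
  rcases d with _ | d
  · exact Subsingleton.elim _ _
  set e₀ : Fin (d + 1) → ℤ := Pi.single 0 1
  have hcyclic (j : Fin (d + 1)) : (M ^ (j : ℕ)) e₀ = Pi.single j 1 :=
    companionMatrix_toLin'_pow_single_zero d.succ_pos j
  have he₀ : aeval M p e₀ = 0 := by
    have hlast : (M ^ (d + 1)) e₀ = fun i : Fin (d + 1) => -p.coeff i := by
      have h := hcyclic (Fin.last d)
      rw [Fin.val_last] at h
      rw [pow_succ', Module.End.mul_apply, h, companionMatrix_toLin'_single_last _ (by simp)]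
    rw [hp.aeval_eq_pow_add_sum hdeg, LinearMap.add_apply, LinearMap.coe_sum,
      Finset.sum_apply]
    simp only [LinearMap.smul_apply, hcyclic, hlast]
    ext i
    simp [Finset.sum_apply, Pi.single_apply]
  refine LinearMap.pi_ext' fun j => LinearMap.ext_ring ?_
  have hcomm : Commute (M ^ (j : ℕ)) (aeval M p) := by
    simpa using (commute_X_pow p j).map (aeval M)
  simp only [LinearMap.comp_apply, LinearMap.coe_single, LinearMap.zero_apply]
  rw [← hcyclic j, ← Module.End.mul_apply, ← hcomm.eq, Module.End.mul_apply, he₀, map_zero]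

theorem linearCombination_powers_companionMatrix_toLin' {S : Type*} [CommRing S] (hp : p.Monic)
    (hdeg : p.natDegree = d) {μ : S} (hμ : aeval μ p = 0) (y : Fin d → ℤ) :
    Fintype.linearCombination ℤ (fun j : Fin d => μ ^ (j : ℕ)) (toLin' (companionMatrix d p) y) =
      μ * Fintype.linearCombination ℤ (fun j : Fin d => μ ^ (j : ℕ)) y := by
  set L := Fintype.linearCombination ℤ (fun j : Fin d => μ ^ (j : ℕ))
  suffices L ∘ₗ toLin' (companionMatrix d p) = LinearMap.mulLeft ℤ μ ∘ₗ L from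
    LinearMap.congr_fun this y
  refine LinearMap.pi_ext' fun j => LinearMap.ext_ring ?_
  simp only [LinearMap.comp_apply, LinearMap.coe_single, LinearMap.mulLeft_apply, L,
    Fintype.linearCombination_apply_single, one_smul]
  rcases (show (j : ℕ) + 1 < d ∨ (j : ℕ) + 1 = d by omega) with h | h
  · rw [companionMatrix_toLin'_single_of_lt j h, Fintype.linearCombination_apply_single,
      one_smul, pow_succ']
  · rw [hp.aeval_eq_pow_add_sum hdeg, add_eq_zero_iff_eq_neg] at hμ
    rw [companionMatrix_toLin'_single_last j h, Fintype.linearCombination_apply, ← pow_succ', h,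
      hμ]
    simp

theorem linearCombination_powers_companionMatrix_toLin'_pow {S : Type*} [CommRing S]
    (hp : p.Monic) (hdeg : p.natDegree = d) {μ : S} (hμ : aeval μ p = 0) (k : ℕ)
    (y : Fin d → ℤ) :
    Fintype.linearCombination ℤ (fun j : Fin d => μ ^ (j : ℕ))
        ((toLin' (companionMatrix d p) ^ k) y) =
      μ ^ k * Fintype.linearCombination ℤ (fun j : Fin d => μ ^ (j : ℕ)) y := by
  induction k with
  | zero => simp
  | succ k ih =>
    rw [pow_succ', Module.End.mul_apply,
      linearCombination_powers_companionMatrix_toLin' hp hdeg hμ, ih, pow_succ', mul_assoc]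

end Companion

theorem cyclotomicCompanion_pow_self (n : ℕ) : cyclotomicCompanion n ^ n = 1 := by
  obtain ⟨q, hq⟩ := cyclotomic.dvd_X_pow_sub_one n ℤ
  have := congrArg (aeval (toLin' (cyclotomicCompanion n))) hq
  rw [cyclotomicCompanion] at this ⊢
  rw [map_mul, aeval_companionMatrix_toLin'_self (cyclotomic.monic n ℤ) (natDegree_cyclotomic n ℤ),
    zero_mul, map_sub, aeval_X_pow, map_one, sub_eq_zero, ← toLin'_pow] at this
  exact toLin'.injective (this.trans toLin'_one.symm)

theorem sum_pow_smul_ιMulti_single_ne_zero {d l n : ℕ} {p : ℤ[X]} {K : Type*} [Field K]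
    [CharZero K] (hp : p.Monic) (hdeg : p.natDegree = d) (hl : l ≤ d) {μ : Fin l → K}
    (hμ : Function.Injective μ) (hroot : ∀ t, aeval (μ t) p = 0) (hprod : ∏ t, μ t = 1)
    (hn : n ≠ 0) :
    ∑ k ∈ range n, (ExteriorAlgebra.map (toLin' (companionMatrix d p))).toLinearMap ^ k •
      ExteriorAlgebra.ιMulti ℤ l (fun s => (Pi.single (Fin.castLE hl s) 1 : Fin d → ℤ)) ≠ 0 := by
  set φ := LinearMap.pi fun t => Fintype.linearCombination ℤ (fun j : Fin d => μ t ^ (j : ℕ))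
  -- `F` is `det (φ (vₛ) t)` on `v₀ ∧ ⋯ ∧ v_{l-1}` and vanishes in all other degrees
  set F := ExteriorAlgebra.liftAlternating (R := ℤ) (Pi.single l (detRowAlternatingComp φ))
  have hterm (k : ℕ) : F ((ExteriorAlgebra.map (toLin' (companionMatrix d p))).toLinearMap ^ k •
      ExteriorAlgebra.ιMulti ℤ l (fun s => (Pi.single (Fin.castLE hl s) 1 : Fin d → ℤ))) =
      (vandermonde μ).det := by
    rw [Module.End.smul_def, ← ExteriorAlgebra.toLinearMap_map_pow, AlgHom.toLinearMap_apply,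
      ExteriorAlgebra.map_apply_ιMulti, ExteriorAlgebra.liftAlternating_apply_ιMulti,
      Pi.single_eq_same, detRowAlternatingComp_apply]
    calc _ = (of fun s t => μ t ^ k * (vandermonde μ)ᵀ s t).det := by
          congr 1
          ext s t
          simp [φ, linearCombination_powers_companionMatrix_toLin'_pow hp hdeg (hroot t),
            Fintype.linearCombination_apply_single]
      _ = (vandermonde μ).det := by
          rw [det_mul_row, det_transpose, prod_pow, hprod, one_pow, one_mul]
  intro h
  have := congrArg F h
  rw [map_sum, sum_congr rfl fun k _ => hterm k, sum_const, card_range, map_zero] at this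
  exact smul_ne_zero hn (det_vandermonde_ne_zero_iff.mpr hμ) this

theorem stmt_4_general (n : ℕ) (hd : 2 * Nat.totient n ≥ n + 5) :
    ∃ l : ℕ, Odd l ∧ 0 < l ∧ l < Nat.totient n ∧
      ∃ v ∈ ⋀[ℤ]^l (Fin (Nat.totient n) → ℤ), v ≠ 0 ∧
        (∀ k : ℕ,
          ExteriorAlgebra.map (Matrix.toLin' ((cyclotomicCompanion n) ^ k)) v = v) := by
  obtain ⟨a, ha_inj, ha, ha_sum⟩ := exists_injective_coprime_sum_eq (n := n) (by omega)
  have hn : n ≠ 0 := by rintro rfl; simp at hd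
  have htot := Nat.totient_le n
  have h3 : 3 ≤ n.totient := by omega
  have hζ := Complex.isPrimitiveRoot_exp n hn
  set ζ := Complex.exp (2 * Real.pi * Complex.I / n)
  set T := (ExteriorAlgebra.map (toLin' (cyclotomicCompanion n))).toLinearMap
  set w := ExteriorAlgebra.ιMulti ℤ 3
    (fun s => (Pi.single (Fin.castLE h3 s) 1 : Fin n.totient → ℤ))
  refine ⟨3, by decide, by norm_num, by omega, ∑ k ∈ range n, T ^ k • w, ?_, ?_, fun k => ?_⟩
  · refine Submodule.sum_mem _ fun k _ => ?_
    rw [Module.End.smul_def, ← ExteriorAlgebra.toLinearMap_map_pow, AlgHom.toLinearMap_apply,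
      ExteriorAlgebra.map_apply_ιMulti]
    exact ExteriorAlgebra.ιMulti_range ℤ 3 (Set.mem_range_self _)
  · refine sum_pow_smul_ιMulti_single_ne_zero (cyclotomic.monic n ℤ) (natDegree_cyclotomic n ℤ)
      h3 (μ := fun t => ζ ^ a t) (fun i j h => ha_inj (hζ.pow_inj (ha i).1 (ha j).1 h))
      (fun t => ?_) ?_ hn
    · rw [aeval_def, eval₂_eq_eval_map, map_cyclotomic]
      exact (hζ.pow_of_coprime _ (ha t).2.symm).isRoot_cyclotomic (Nat.pos_of_ne_zero hn)
    · rw [prod_pow_eq_pow_sum, ha_sum, hζ.pow_eq_one]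
  · have hT : T ^ n = 1 := by
      rw [← ExteriorAlgebra.toLinearMap_map_pow, ← toLin'_pow, cyclotomicCompanion_pow_self,
        toLin'_one, ExteriorAlgebra.map_id, AlgHom.toLinearMap_id, Module.End.one_eq_id]
    rw [toLin'_pow, ← AlgHom.toLinearMap_apply, ExteriorAlgebra.toLinearMap_map_pow,
      ← Module.End.smul_def]
    exact pow_smul_sum_pow_smul_of_pow_eq_one hT w k

/-- For odd `n ≥ 7` with `d = φ(n)` and `2d ≥ n + 5`, there is an odd `l`,
`0 < l < d`, and a nonzero element of `Λ^l ℤ^d` fixed by the map induced by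
`C_n`; in particular `∑_{l} rank_ℤ((Λ^{2l+1}ℤ^d)^{ℤ_n}) > 0`. -/
theorem stmt_4 (n : ℕ) (hn : 7 ≤ n) (hodd : Odd n)
    (hd : 2 * Nat.totient n ≥ n + 5) :
    ∃ l : ℕ, Odd l ∧ 0 < l ∧ l < Nat.totient n ∧
      ∃ v ∈ ⋀[ℤ]^l (Fin (Nat.totient n) → ℤ), v ≠ 0 ∧
        (∀ k : ℕ,
          ExteriorAlgebra.map (Matrix.toLin' ((cyclotomicCompanion n) ^ k)) v = v) :=
  stmt_4_general n hd
end

section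
/- Let n ≥ 7 be odd and d = φ(n). Then 2d ≥ n + 5 if and only if there exists a partition {I, J} of {1, ..., d} such that both |I| and |J| are odd and the set of differences J - I = {j - i : i ∈ I, j ∈ J} is congruent to {1, 2, ..., n-1} modulo n (i.e., every nonzero residue class mod n is represented by some j - i and every j - i is congruent to some element of {1,...,n-1} mod n). -/
/-!
For disjoint `I, J ⊆ [1, d]` with `d < n`, every difference `j - i` lies in `(-d, d) \ {0}`, so
`J - I ≡ {1, …, n-1} (mod n)` says exactly that each `r ∈ [1, n-1]` equals `j - i` or `j - i + n`.
Representing `r = d` already forces `n ≤ 2d - 1`. If `n = 2d - 1`, the residues `d` and `d - 1`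
are represented only by `(i, j) = (d, 1)` and `(1, d)`, so `d` would lie in both `I` and `J`.
If `n = 2d - 3`, the part containing `1` must also contain `d` and, working inwards from both
ends, nothing else, so it has even size. Conversely, when `2d ≥ n + 5`, the sets `I = {1, 2, d}`
and `J = [3, d - 1]` work, `|J| = d - 3` being odd because `φ(n)` is even.
-/

/-- `J - I` is congruent to `{1, 2, …, n-1}` modulo `n`: every difference
`j - i` is congruent mod `n` to some element of `{1, …, n-1}`, and every
element of `{1, …, n-1}` is congruent mod `n` to some difference `j - i`. -/
def DiffModEqFull (n : ℕ) (I J : Finset ℤ) : Prop :=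
  (∀ i ∈ I, ∀ j ∈ J, ∃ r : ℤ, 1 ≤ r ∧ r ≤ (n : ℤ) - 1 ∧ j - i ≡ r [ZMOD (n : ℤ)]) ∧
  (∀ r : ℤ, 1 ≤ r → r ≤ (n : ℤ) - 1 → ∃ i ∈ I, ∃ j ∈ J, j - i ≡ r [ZMOD (n : ℤ)])

open Finset

theorem eq_or_eq_sub_of_modEq {N a r : ℤ} (h : a ≡ r [ZMOD N]) (ha₀ : -N < a) (ha₁ : a < N)
    (hr₀ : 0 ≤ r) (hr₁ : r < N) : a = r ∨ a = r - N := by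
  have hr : r % N = r := Int.emod_eq_of_lt hr₀ hr₁
  rcases le_or_gt 0 a with ha | ha
  · left
    rw [← hr, ← h.eq, Int.emod_eq_of_lt ha ha₁]
  · right
    have h' : a + N ≡ r [ZMOD N] := Int.add_modEq_right.trans h
    have : a + N = r := by rw [← hr, ← h'.eq, Int.emod_eq_of_lt (by omega) (by omega)]
    omega

/-- The integer form of the covering half of `DiffModEqFull N I J` when all differences lie in
`(-N, N)`. -/
def CoversByDiffs (N : ℕ) (I J : Finset ℤ) : Prop :=
  ∀ r : ℤ, 1 ≤ r → r ≤ N - 1 → ∃ i ∈ I, ∃ j ∈ J, j - i = r ∨ j - i = r - N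

theorem diffModEqFull_iff_coversByDiffs {N D : ℕ} {I J : Finset ℤ} (hI : I ⊆ Icc 1 (D : ℤ))
    (hJ : J ⊆ Icc 1 (D : ℤ)) (hIJ : Disjoint I J) (hDN : D ≤ N) :
    DiffModEqFull N I J ↔ CoversByDiffs N I J := by
  have hsep := disjoint_iff_ne.mp hIJ
  constructor
  · intro h r hr₁ hr₂
    obtain ⟨i, hi, j, hj, hij⟩ := h.2 r hr₁ hr₂
    have := mem_Icc.mp (hI hi)
    have := mem_Icc.mp (hJ hj)
    exact ⟨i, hi, j, hj, eq_or_eq_sub_of_modEq hij (by omega) (by omega) (by omega) (by omega)⟩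
  · intro h
    refine ⟨fun i hi j hj => ?_, fun r hr₁ hr₂ => ?_⟩
    · have := mem_Icc.mp (hI hi)
      have := mem_Icc.mp (hJ hj)
      have := hsep i hi j hj
      rcases lt_or_gt_of_ne (sub_ne_zero.mpr this.symm) with hneg | hpos
      · exact ⟨j - i + N, by omega, by omega, Int.add_modEq_right.symm⟩
      · exact ⟨j - i, by omega, by omega, Int.ModEq.refl _⟩
    · obtain ⟨i, hi, j, hj, hij | hij⟩ := h r hr₁ hr₂
      · exact ⟨i, hi, j, hj, hij ▸ Int.ModEq.refl _⟩
      · exact ⟨i, hi, j, hj, Int.modEq_iff_dvd.mpr ⟨1, by rw [hij]; ring⟩⟩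

namespace CoversByDiffs

variable {N D : ℕ} {I J : Finset ℤ}

theorem symm (h : CoversByDiffs N I J) : CoversByDiffs N J I := by
  intro r hr₁ hr₂
  obtain ⟨i, hi, j, hj, hij⟩ := h (N - r) (by omega) (by omega)
  exact ⟨j, hj, i, hi, by omega⟩

theorem add_one_le_two_mul (h : CoversByDiffs N I J) (hI : I ⊆ Icc 1 (D : ℤ))
    (hJ : J ⊆ Icc 1 (D : ℤ)) (hD : 0 < D) (hDN : D < N) : N + 1 ≤ 2 * D := by
  obtain ⟨i, hi, j, hj, hij⟩ := h D (by omega) (by omega)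
  have := mem_Icc.mp (hI hi)
  have := mem_Icc.mp (hJ hj)
  omega

theorem natCast_mem_of_two_mul_eq_add_one (h : CoversByDiffs N I J) (hI : I ⊆ Icc 1 (D : ℤ))
    (hJ : J ⊆ Icc 1 (D : ℤ)) (hDN : D < N) (hN : 2 * D = N + 1) : (D : ℤ) ∈ I := by
  obtain ⟨i, hi, j, hj, hij⟩ := h D (by omega) (by omega)
  have := mem_Icc.mp (hI hi)
  have := mem_Icc.mp (hJ hj)
  obtain rfl : i = D := by omega
  exact hi

theorem natCast_notMem_of_two_mul_eq_add_three (h : CoversByDiffs N I J)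
    (hI : I ⊆ Icc 1 (D : ℤ)) (hJ : J ⊆ Icc 1 (D : ℤ)) (hIJ : Disjoint I J) (hDN : D < N)
    (hN : 2 * D = N + 3) (h1 : 1 ∈ I) : (D : ℤ) ∉ J := by
  intro hD
  have hsep := disjoint_iff_ne.mp hIJ
  -- `D ≡ 3 - D` forces the pair `(D - 1, 2)`, and then `D - 2` has no representation left.
  obtain ⟨i, hi, j, hj, hij⟩ := h D (by omega) (by omega)
  obtain ⟨i', hi', j', hj', hij'⟩ := h (D - 2) (by omega) (by omega)
  have := mem_Icc.mp (hI hi)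
  have := mem_Icc.mp (hJ hj)
  have := mem_Icc.mp (hI hi')
  have := mem_Icc.mp (hJ hj')
  have := hsep 1 h1 j hj
  have := hsep i hi D hD
  have := hsep i' hi' D hD
  have := hsep i' hi' j hj
  have := hsep i hi j' hj'
  omega

theorem subset_pair_of_two_mul_eq_add_three (h : CoversByDiffs N I J)
    (hI : I ⊆ Icc 1 (D : ℤ)) (hJ : J ⊆ Icc 1 (D : ℤ)) (hIJ : Disjoint I J)
    (hN : 2 * D = N + 3) (h1 : 1 ∈ I) (hD : (D : ℤ) ∈ I) : I ⊆ {1, (D : ℤ)} := by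
  have hsep := disjoint_iff_ne.mp hIJ
  -- Take an inner point `m ∈ I` closest to the boundary of `[1, D]`; a representation of
  -- `D + m - 3` (if `m` is in the left half) or `m - 1` (otherwise) yields a closer one.
  intro x hx
  by_contra hx'
  obtain ⟨m, hm, hmin⟩ := (I.filter (· ∉ ({1, (D : ℤ)} : Finset ℤ))).exists_min_image
    (fun m => min (m - 1) (D - m)) ⟨x, mem_filter.mpr ⟨hx, hx'⟩⟩
  simp only [mem_filter, mem_insert, mem_singleton, not_or] at hm hmin
  obtain ⟨hmI, hm1, hmD⟩ := hm
  have := mem_Icc.mp (hI hmI)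
  suffices ∃ i ∈ I, i ≠ 1 ∧ i ≠ D ∧ min (i - 1) (D - i) < min (m - 1) (D - m) by
    obtain ⟨i, hi, hi1, hiD, hlt⟩ := this
    exact (hmin i ⟨hi, hi1, hiD⟩).not_gt hlt
  have hJ' : ∀ j ∈ J, 2 ≤ j ∧ j < D ∧ j ≠ m := fun j hj => by
    have := mem_Icc.mp (hJ hj)
    have := hsep 1 h1 j hj
    have := hsep m hmI j hj
    have := hsep D hD j hj
    omega
  rcases le_or_gt (m - 1) (D - m) with hleft | hright
  · obtain ⟨i, hi, j, hj, hij⟩ := h (D + m - 3) (by omega) (by omega)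
    have := mem_Icc.mp (hI hi)
    have := hJ' j hj
    exact ⟨i, hi, by omega, by omega, by omega⟩
  · obtain ⟨i, hi, j, hj, hij⟩ := h (m - 1) (by omega) (by omega)
    have := mem_Icc.mp (hI hi)
    have := hJ' j hj
    exact ⟨i, hi, by omega, by omega, by omega⟩

theorem eq_pair_of_two_mul_eq_add_three (h : CoversByDiffs N I J)
    (hU : I ∪ J = Icc 1 (D : ℤ)) (hIJ : Disjoint I J) (hDN : D < N) (hN : 2 * D = N + 3)
    (h1 : 1 ∈ I) : I = {1, (D : ℤ)} := by
  have hI : I ⊆ Icc 1 (D : ℤ) := hU ▸ subset_union_left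
  have hJ : J ⊆ Icc 1 (D : ℤ) := hU ▸ subset_union_right
  have hD : (D : ℤ) ∈ I := by
    have hD : (D : ℤ) ∈ I ∪ J := hU ▸ mem_Icc.mpr ⟨by omega, le_rfl⟩
    exact (mem_union.mp hD).resolve_right
      (h.natCast_notMem_of_two_mul_eq_add_three hI hJ hIJ hDN hN h1)
  refine (h.subset_pair_of_two_mul_eq_add_three hI hJ hIJ hN h1 hD).antisymm ?_
  rw [insert_subset_iff, singleton_subset_iff]
  exact ⟨h1, hD⟩

end CoversByDiffs

theorem add_five_le_two_mul_of_diffModEqFull {N D : ℕ} {I J : Finset ℤ} (hN : Odd N)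
    (hDN : D < N) (hU : I ∪ J = Icc 1 (D : ℤ)) (hIJ : Disjoint I J) (hIodd : Odd I.card)
    (hJodd : Odd J.card) (h : DiffModEqFull N I J) : N + 5 ≤ 2 * D := by
  have hI : I ⊆ Icc 1 (D : ℤ) := hU ▸ subset_union_left
  have hJ : J ⊆ Icc 1 (D : ℤ) := hU ▸ subset_union_right
  have hU' : J ∪ I = Icc 1 (D : ℤ) := union_comm J I ▸ hU
  have hcov := (diffModEqFull_iff_coversByDiffs hI hJ hIJ hDN.le).mp h
  obtain ⟨x, hx⟩ := card_pos.mp hIodd.pos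
  have hD : 0 < D := by have := mem_Icc.mp (hI hx); omega
  have := hcov.add_one_le_two_mul hI hJ hD hDN
  by_contra hlt
  obtain ⟨k, rfl⟩ := hN
  obtain hN | hN : 2 * D = 2 * k + 1 + 1 ∨ 2 * D = 2 * k + 1 + 3 := by omega
  · exact disjoint_left.mp hIJ (hcov.natCast_mem_of_two_mul_eq_add_one hI hJ hDN hN)
      (hcov.symm.natCast_mem_of_two_mul_eq_add_one hJ hI hDN hN)
  · have hpair : ({1, (D : ℤ)} : Finset ℤ).card = 2 := card_pair (by omega)
    have h1 : (1 : ℤ) ∈ I ∪ J := hU ▸ mem_Icc.mpr ⟨le_rfl, by omega⟩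
    rcases mem_union.mp h1 with h1 | h1
    · rw [hcov.eq_pair_of_two_mul_eq_add_three hU hIJ hDN hN h1, hpair] at hIodd
      exact Nat.not_odd_iff_even.mpr even_two hIodd
    · rw [hcov.symm.eq_pair_of_two_mul_eq_add_three hU' hIJ.symm hDN hN h1, hpair] at hJodd
      exact Nat.not_odd_iff_even.mpr even_two hJodd

theorem coversByDiffs_triple_Icc {N D : ℕ} (hDN : D < N) (h : N + 4 ≤ 2 * D) :
    CoversByDiffs N {1, 2, (D : ℤ)} (Icc 3 ((D : ℤ) - 1)) := by
  intro r hr₁ hr₂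
  simp only [mem_insert, mem_singleton, mem_Icc, exists_eq_or_imp, exists_eq_left]
  rcases lt_trichotomy r 1 with _ | rfl | _
  · omega
  · exact Or.inr (Or.inl ⟨3, by omega⟩)
  · rcases le_or_gt r (D - 2) with hr | hr
    · exact Or.inl ⟨r + 1, by omega⟩
    · exact Or.inr (Or.inr ⟨r + D - N, by omega⟩)

theorem exists_odd_partition_diffModEqFull {N D : ℕ} (hD : Even D) (hDN : D < N)
    (h : N + 4 ≤ 2 * D) :
    ∃ I J : Finset ℤ, I ∪ J = Icc 1 (D : ℤ) ∧ Disjoint I J ∧ Odd I.card ∧ Odd J.card ∧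
      DiffModEqFull N I J := by
  have hU : {1, 2, (D : ℤ)} ∪ Icc 3 ((D : ℤ) - 1) = Icc 1 (D : ℤ) := by
    ext x
    simp only [mem_union, mem_insert, mem_singleton, mem_Icc]
    omega
  have hIJ : Disjoint ({1, 2, (D : ℤ)} : Finset ℤ) (Icc 3 ((D : ℤ) - 1)) := by
    simp only [disjoint_left, mem_insert, mem_singleton, mem_Icc]
    omega
  refine ⟨_, _, hU, hIJ, ?_, ?_, ?_⟩
  · rw [card_eq_three.mpr ⟨1, 2, _, by omega, by omega, by omega, rfl⟩]
    exact odd_two_mul_add_one 1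
  · obtain ⟨k, hk⟩ := hD
    rw [Int.card_Icc]
    exact ⟨k - 2, by omega⟩
  · exact (diffModEqFull_iff_coversByDiffs (hU ▸ subset_union_left) (hU ▸ subset_union_right)
      hIJ hDN.le).mpr (coversByDiffs_triple_Icc hDN h)

/-- For odd `n ≥ 7` and `d = φ(n)`: `2d ≥ n + 5` iff there is a partition
`{I, J}` of `{1, …, d}` with `|I|`, `|J|` odd and `J - I ≡ {1, …, n-1} (mod n)`. -/
theorem stmt_6 (n d : ℕ) (hn : 7 ≤ n) (hodd : Odd n) (hd : d = Nat.totient n) :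
    2 * d ≥ n + 5 ↔
      ∃ I J : Finset ℤ, I ∪ J = Finset.Icc 1 (d : ℤ) ∧ Disjoint I J ∧
        Odd I.card ∧ Odd J.card ∧ DiffModEqFull n I J := by
  have hdn : d < n := hd ▸ Nat.totient_lt n (by omega)
  have hdeven : Even d := hd ▸ Nat.totient_even (by omega)
  exact ⟨fun h => exists_odd_partition_diffModEqFull hdeven hdn (by omega),
    fun ⟨I, J, hU, hIJ, hIodd, hJodd, h⟩ =>
      add_five_le_two_mul_of_diffModEqFull hodd hdn hU hIJ hIodd hJodd h⟩
end

section
/- Let n ≥ 7 be odd, d = φ(n), and suppose 2d ≥ n + 5. Then with I = {1, 2, d} and J = {3, 4, ..., d-1}, both |I| and |J| are odd and J - I ≡ {1, 2, ..., n-1} (mod n). -/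
/-
The differences `j - i` are nonzero and lie strictly between `-n` and `n`, so none of them is
`0 mod n`. Conversely, `r ∈ [1, d-3]` is `(r+2) - 2`, `d-2` is `(d-1) - 1`, and `r ∈ [d-1, n-1]` is
congruent to `(r+d-n) - d`, where `r+d-n ≥ 3` is exactly the hypothesis `2d ≥ n+5`. The
cardinalities are `3` and `d - 3`, the latter odd because `φ(n)` is even for `n > 2`.
-/

lemma Int.exists_modEq_mem_Icc_of_not_dvd {n x : ℤ} (hn : 0 < n) (hx : ¬ n ∣ x) :
    ∃ r : ℤ, 1 ≤ r ∧ r ≤ n - 1 ∧ x ≡ r [ZMOD n] := by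
  have hpos : 0 < x % n := (Int.emod_pos_of_not_dvd hx).resolve_left hn.ne'
  have hlt : x % n < n := Int.emod_lt_of_pos x hn
  exact ⟨x % n, by omega, by omega, (Int.mod_modEq x n).symm⟩

lemma Int.not_dvd_of_ne_zero_of_abs_lt {n x : ℤ} (hx : x ≠ 0) (hxn : |x| < n) : ¬ n ∣ x :=
  fun h ↦ hx (Int.eq_zero_of_abs_lt_dvd h hxn)

lemma card_one_two_d {d : ℤ} (hd : 3 ≤ d) : ({1, 2, d} : Finset ℤ).card = 3 := by
  rw [Finset.card_insert_of_notMem (by simp; omega),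
    Finset.card_insert_of_notMem (by simp; omega), Finset.card_singleton]

lemma card_Icc_three_pred (d : ℕ) : (Finset.Icc (3 : ℤ) ((d : ℤ) - 1)).card = d - 3 := by
  rw [Int.card_Icc]
  omega

lemma diffModEqFull_one_two_d {n d : ℕ} (hdn : d < n) (h2d : n + 5 ≤ 2 * d) :
    DiffModEqFull n {1, 2, (d : ℤ)} (Finset.Icc (3 : ℤ) ((d : ℤ) - 1)) := by
  constructor
  · intro i hi j hj
    simp only [Finset.mem_insert, Finset.mem_singleton] at hi
    rw [Finset.mem_Icc] at hj
    refine Int.exists_modEq_mem_Icc_of_not_dvd (by omega)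
      (Int.not_dvd_of_ne_zero_of_abs_lt ?_ ?_)
    · rcases hi with rfl | rfl | rfl <;> omega
    · rw [abs_lt]
      rcases hi with rfl | rfl | rfl <;> omega
  · intro r hr1 hrn
    by_cases hsmall : r ≤ (d : ℤ) - 3
    · exact ⟨2, by simp, r + 2, Finset.mem_Icc.mpr (by omega),
        Int.modEq_iff_dvd.mpr ⟨0, by omega⟩⟩
    by_cases hmid : r = (d : ℤ) - 2
    · exact ⟨1, by simp, (d : ℤ) - 1, Finset.mem_Icc.mpr (by omega),
        Int.modEq_iff_dvd.mpr ⟨0, by omega⟩⟩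
    · exact ⟨d, by simp, r + d - n, Finset.mem_Icc.mpr (by omega),
        Int.modEq_iff_dvd.mpr ⟨1, by omega⟩⟩

theorem stmt_7_general (n d : ℕ) (hd : d = Nat.totient n)
    (h2d : 2 * d ≥ n + 5) :
    Odd ({1, 2, (d : ℤ)} : Finset ℤ).card ∧
    Odd (Finset.Icc (3 : ℤ) ((d : ℤ) - 1)).card ∧
    DiffModEqFull n {1, 2, (d : ℤ)} (Finset.Icc (3 : ℤ) ((d : ℤ) - 1)) := by
  have hn : 5 ≤ n := by
    have := hd ▸ Nat.totient_le n
    omega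
  have hdn : d < n := hd ▸ Nat.totient_lt n (by omega)
  have heven : Even d := hd ▸ Nat.totient_even (by omega)
  refine ⟨?_, ?_, diffModEqFull_one_two_d hdn (by omega)⟩
  · rw [card_one_two_d (by omega)]
    decide
  · rw [card_Icc_three_pred]
    exact Nat.Even.sub_odd (by omega) heven (by decide)

/-- For odd `n ≥ 7`, `d = φ(n)` and `2d ≥ n + 5`, the sets `I = {1, 2, d}` and
`J = {3, 4, …, d-1}` have odd cardinality and satisfy
`J - I ≡ {1, …, n-1} (mod n)`. -/
theorem stmt_7 (n d : ℕ) (hn : 7 ≤ n) (hodd : Odd n) (hd : d = Nat.totient n)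
    (h2d : 2 * d ≥ n + 5) :
    Odd ({1, 2, (d : ℤ)} : Finset ℤ).card ∧
    Odd (Finset.Icc (3 : ℤ) ((d : ℤ) - 1)).card ∧
    DiffModEqFull n {1, 2, (d : ℤ)} (Finset.Icc (3 : ℤ) ((d : ℤ) - 1)) :=
  stmt_7_general n d hd h2d
end

section
/- Let n ≥ 3, d = φ(n), and let θ be an irrational real number. Define Θ := θ ∑_{k=0}^{n-1} (C_n^k)^t (C_n^t - C_n) C_n^k, where C_n is the companion matrix of the n-th cyclotomic polynomial. Then Θ is a real skew-symmetric d × d matrix satisfying C_n^t Θ C_n = Θ, and Θ is nondegenerate: if x ∈ ℤ^d satisfies Θx ∈ ℤ^d, then x = 0. -/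
open Matrix

/-!
Put `G = ∑_{k<n} (Cᵏ)ᵀ Cᵏ`. The sum defining `Θ / θ` equals `M = Cᵀ G - G C`, and since `Cⁿ = 1`
the matrix `G` is invariant under `X ↦ Cᵀ X C`; this gives `Cᵀ M C = M` and `M C = G (1 - C²)`.
`G` is positive definite, and `1 - C²` is invertible because `Φₙ(C) = 0` while `Φₙ` is coprime to
`(X - 1)(X + 1)` for `n ≥ 3`; hence `M` is invertible. For integral `x`, `M x` is an integral
vector, so integrality of `Θ x = θ M x` with `θ` irrational forces `M x = 0`, that is `x = 0`.
-/

open Polynomial Finset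

section Companion

variable {d : ℕ} {p : ℤ[X]}

lemma companionMatrix_mulVec_single_of_succ_lt {k : ℕ} (hk : k + 1 < d) :
    companionMatrix d p *ᵥ Pi.single ⟨k, by omega⟩ 1 = Pi.single ⟨k + 1, hk⟩ 1 := by
  ext i
  simp [mulVec_single, companionMatrix, Pi.single_apply, Fin.ext_iff,
    show k ≠ d - 1 by omega]

lemma companionMatrix_pow_mulVec_single_zero {k : ℕ} (hk : k < d) :
    companionMatrix d p ^ k *ᵥ Pi.single ⟨0, by omega⟩ 1 = Pi.single ⟨k, hk⟩ 1 := by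
  induction k with
  | zero => rw [pow_zero, one_mulVec]
  | succ k ih =>
    rw [pow_succ', ← mulVec_mulVec, ih (by omega), companionMatrix_mulVec_single_of_succ_lt]

lemma companionMatrix_mulVec_single_last (hd : 0 < d) :
    companionMatrix d p *ᵥ Pi.single ⟨d - 1, by omega⟩ 1 = fun i : Fin d => -p.coeff i := by
  ext i
  simp [mulVec_single, companionMatrix]

lemma aeval_companionMatrix_mulVec_single_zero (hp : p.Monic) (hdeg : p.natDegree = d)
    (hd : 0 < d) : aeval (companionMatrix d p) p *ᵥ Pi.single ⟨0, hd⟩ 1 = 0 := by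
  have hlow : ∑ k ∈ range d, p.coeff k • (companionMatrix d p ^ k *ᵥ Pi.single ⟨0, hd⟩ 1) =
      fun i : Fin d => p.coeff i := by
    rw [← Fin.sum_univ_eq_sum_range
      (fun k => p.coeff k • (companionMatrix d p ^ k *ᵥ Pi.single ⟨0, hd⟩ 1))]
    have hbasis (k : Fin d) :
        companionMatrix d p ^ (k : ℕ) *ᵥ Pi.single ⟨0, hd⟩ 1 = Pi.single k 1 :=
      companionMatrix_pow_mulVec_single_zero k.2
    ext i
    simp [hbasis, Finset.sum_apply, Pi.single_apply]
  have htop : companionMatrix d p ^ d *ᵥ Pi.single ⟨0, hd⟩ 1 = fun i : Fin d => -p.coeff i := by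
    have hpow : companionMatrix d p ^ d = companionMatrix d p * companionMatrix d p ^ (d - 1) := by
      rw [← pow_succ', Nat.sub_add_cancel hd]
    rw [hpow, ← mulVec_mulVec,
      companionMatrix_pow_mulVec_single_zero (by omega), companionMatrix_mulVec_single_last hd]
  have hlead : p.coeff d = 1 := hdeg ▸ hp.coeff_natDegree
  rw [aeval_eq_sum_range' (n := d + 1) (by omega), sum_mulVec, sum_range_succ]
  simp only [smul_mulVec]
  rw [hlow, htop, hlead, one_smul]
  ext i
  simp

theorem aeval_companionMatrix_self (hp : p.Monic) (hdeg : p.natDegree = d) :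
    aeval (companionMatrix d p) p = 0 := by
  rcases Nat.eq_zero_or_pos d with rfl | hd
  · exact Subsingleton.elim _ _
  set C := companionMatrix d p
  ext i j
  have hcol : Pi.single j (1 : ℤ) = C ^ (j : ℕ) *ᵥ Pi.single ⟨0, hd⟩ 1 :=
    (companionMatrix_pow_mulVec_single_zero j.2).symm
  have hcomm : aeval C p * C ^ (j : ℕ) = C ^ (j : ℕ) * aeval C p := by
    simpa only [map_mul, map_pow, aeval_X] using congrArg (aeval C) (mul_comm p (X ^ (j : ℕ)))
  calc aeval C p i j = (aeval C p *ᵥ Pi.single j 1) i := by simp [mulVec_single]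
    _ = 0 := by
      rw [hcol, mulVec_mulVec, hcomm, ← mulVec_mulVec,
        aeval_companionMatrix_mulVec_single_zero hp hdeg hd, mulVec_zero, Pi.zero_apply]

end Companion

section CyclicGram

variable {ι : Type*} [Fintype ι] [DecidableEq ι]

def cyclicGram {R : Type*} [CommRing R] (C : Matrix ι ι R) (n : ℕ) : Matrix ι ι R :=
  ∑ k ∈ range n, (C ^ k)ᵀ * C ^ k

def cyclicSkew {R : Type*} [CommRing R] (C : Matrix ι ι R) (n : ℕ) : Matrix ι ι R :=
  ∑ k ∈ range n, (C ^ k)ᵀ * (Cᵀ - C) * C ^ k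

variable {R : Type*} [CommRing R] (C : Matrix ι ι R) (n : ℕ)

lemma cyclicGram_transpose : (cyclicGram C n)ᵀ = cyclicGram C n := by
  simp [cyclicGram, transpose_sum, transpose_mul]

lemma cyclicSkew_eq_transpose_mul_sub_mul :
    cyclicSkew C n = Cᵀ * cyclicGram C n - cyclicGram C n * C := by
  simp only [cyclicSkew, cyclicGram, Finset.mul_sum, Finset.sum_mul, ← Finset.sum_sub_distrib]
  refine Finset.sum_congr rfl fun k _ => ?_
  rw [Matrix.mul_sub, Matrix.sub_mul, ← transpose_mul, ← pow_succ', pow_succ, transpose_mul,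
    Matrix.mul_assoc, Matrix.mul_assoc, Matrix.mul_assoc, ← pow_succ, pow_succ']

lemma map_cyclicGram {S : Type*} [CommRing S] (f : R →+* S) :
    (cyclicGram C n).map f = cyclicGram (C.map f) n := by
  change f.mapMatrix _ = _
  simp only [cyclicGram, map_sum, _root_.map_mul, RingHom.mapMatrix_apply, transpose_map,
    Matrix.map_pow]

lemma map_cyclicSkew {S : Type*} [CommRing S] (f : R →+* S) :
    (cyclicSkew C n).map f = cyclicSkew (C.map f) n := by
  simp [cyclicSkew_eq_transpose_mul_sub_mul, ← map_cyclicGram, Matrix.map_sub, Matrix.map_mul,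
    transpose_map]

variable {C n}

lemma transpose_mul_cyclicGram_mul (hC : C ^ n = 1) : Cᵀ * cyclicGram C n * C = cyclicGram C n := by
  have hshift : Cᵀ * cyclicGram C n * C = ∑ k ∈ range n, (C ^ (k + 1))ᵀ * C ^ (k + 1) := by
    simp only [cyclicGram, Finset.mul_sum, Finset.sum_mul, pow_succ, transpose_mul,
      Matrix.mul_assoc]
  have hsplit := sum_range_succ' (fun k => (C ^ k)ᵀ * C ^ k) n
  rw [sum_range_succ, hC, pow_zero] at hsplit
  rw [hshift, cyclicGram]
  exact add_right_cancel hsplit.symm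

lemma cyclicSkew_transpose : (cyclicSkew C n)ᵀ = -cyclicSkew C n := by
  rw [cyclicSkew_eq_transpose_mul_sub_mul, transpose_sub, transpose_mul, transpose_mul,
    transpose_transpose, cyclicGram_transpose, neg_sub]

lemma transpose_mul_cyclicSkew_mul (hC : C ^ n = 1) : Cᵀ * cyclicSkew C n * C = cyclicSkew C n := by
  set G := cyclicGram C n
  calc Cᵀ * cyclicSkew C n * C = Cᵀ * (Cᵀ * G * C) - (Cᵀ * G * C) * C := by
        simp only [cyclicSkew_eq_transpose_mul_sub_mul, G, Matrix.mul_sub, Matrix.sub_mul,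
          Matrix.mul_assoc]
    _ = cyclicSkew C n := by
        rw [transpose_mul_cyclicGram_mul hC, cyclicSkew_eq_transpose_mul_sub_mul]

lemma cyclicSkew_mul (hC : C ^ n = 1) : cyclicSkew C n * C = cyclicGram C n * (1 - C ^ 2) := by
  rw [cyclicSkew_eq_transpose_mul_sub_mul, Matrix.sub_mul, transpose_mul_cyclicGram_mul hC,
    Matrix.mul_sub, Matrix.mul_one, sq, Matrix.mul_assoc]

end CyclicGram

section Positivity
variable {ι : Type*} [Fintype ι] [DecidableEq ι]
  {K : Type*} [Field K] [PartialOrder K] [StarRing K] [StarOrderedRing K] [TrivialStar K]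
  {C : Matrix ι ι K} {n : ℕ}

lemma posDef_cyclicGram (hn : 0 < n) : (cyclicGram C n).PosDef := by
  obtain ⟨m, rfl⟩ := Nat.exists_eq_add_of_lt hn
  rw [cyclicGram, zero_add, sum_range_succ', pow_zero, transpose_one, Matrix.one_mul]
  refine PosDef.posSemidef_add (posSemidef_sum _ fun k _ => ?_) PosDef.one
  simpa [conjTranspose_eq_transpose_of_trivial] using
    posSemidef_conjTranspose_mul_self (C ^ (k + 1))

lemma isUnit_cyclicSkew (hC : C ^ n = 1) (hn : 0 < n) (h : IsUnit (1 - C ^ 2)) :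
    IsUnit (cyclicSkew C n) := by
  have hprod : IsUnit (cyclicSkew C n * C) := by
    rw [cyclicSkew_mul hC]
    exact (posDef_cyclicGram hn).isUnit.mul h
  exact isUnit_of_mul_isUnit_left hprod

end Positivity

lemma aeval_cyclotomic_map_cyclotomicCompanion (n : ℕ) {R : Type*} [CommRing R] :
    aeval ((cyclotomicCompanion n).map (Int.cast : ℤ → R)) (cyclotomic n R) = 0 := by
  have h := aeval_companionMatrix_self (cyclotomic.monic n ℤ) (natDegree_cyclotomic n ℤ)
  rw [← map_cyclotomic n (algebraMap ℤ R), aeval_map_algebraMap]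
  change aeval ((Int.castRingHom R).toIntAlgHom.mapMatrix (cyclotomicCompanion n)) _ = 0
  rw [aeval_algHom_apply, cyclotomicCompanion, h, map_zero]

lemma pow_eq_one_of_aeval_cyclotomic {R A : Type*} [CommRing R] [Ring A] [Algebra R A] {a : A}
    {n : ℕ} (h : aeval a (cyclotomic n R) = 0) : a ^ n = 1 := by
  have := aeval_eq_zero_of_dvd_aeval_eq_zero (cyclotomic.dvd_X_pow_sub_one n R) h
  rwa [map_sub, map_pow, aeval_X, map_one, sub_eq_zero] at this

lemma isUnit_aeval_of_isCoprime {R A : Type*} [CommRing R] [Ring A] [Algebra R A] {a : A}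
    {p q : R[X]} (hp : aeval a p = 0) (hpq : IsCoprime p q) : IsUnit (aeval a q) := by
  obtain ⟨u, v, huv⟩ := hpq
  have hvq : aeval a v * aeval a q = 1 := by
    simpa [hp] using congrArg (aeval a) huv
  have hqv : aeval a q * aeval a v = 1 := by
    rwa [← map_mul, mul_comm, map_mul]
  exact ⟨⟨_, _, hqv, hvq⟩, rfl⟩

lemma isCoprime_cyclotomic_one_sub_X_sq {K : Type*} [Field K] [CharZero K] {n : ℕ}
    (h1 : n ≠ 1) (h2 : n ≠ 2) : IsCoprime (cyclotomic n K) (1 - X ^ 2) := by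
  have hℚ : IsCoprime (cyclotomic n ℚ) (1 - X ^ 2) := by
    have h := (cyclotomic.isCoprime_rat h1).mul_right (cyclotomic.isCoprime_rat h2)
    rw [cyclotomic_one, cyclotomic_two] at h
    rw [show (1 - X ^ 2 : ℚ[X]) = -((X - 1) * (X + 1)) by ring]
    exact h.neg_right
  simpa using hℚ.map (mapRingHom (algebraMap ℚ K))

lemma intCast_eq_zero_of_irrational_mul {θ : ℝ} (hθ : Irrational θ) {k m : ℤ} (h : θ * k = m) :
    k = 0 := by
  by_contra hk
  exact (hθ.mul_intCast hk).ne_int m h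

/-- For `n ≥ 3`, `d = φ(n)` and an irrational `θ`, the matrix
`Θ = θ ∑_{k=0}^{n-1} (C_n^k)ᵗ (C_nᵗ - C_n) C_n^k` is skew-symmetric, satisfies
`C_nᵗ Θ C_n = Θ`, and is nondegenerate: `Θ x ∈ ℤ^d` forces `x = 0`. -/
theorem stmt_12 (n : ℕ) (hn : 3 ≤ n) (θ : ℝ) (hθ : Irrational θ)
    (C : Matrix (Fin (Nat.totient n)) (Fin (Nat.totient n)) ℝ)
    (hC : C = (cyclotomicCompanion n).map (Int.cast : ℤ → ℝ))
    (Θ : Matrix (Fin (Nat.totient n)) (Fin (Nat.totient n)) ℝ)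
    (hΘ : Θ = θ • ∑ k ∈ Finset.range n, ((C ^ k)ᵀ * (Cᵀ - C) * (C ^ k))) :
    Θᵀ = -Θ ∧ Cᵀ * Θ * C = Θ ∧
      ∀ x : Fin (Nat.totient n) → ℤ,
        (∀ i, ∃ m : ℤ, Θ.mulVec (fun j => (x j : ℝ)) i = (m : ℝ)) → x = 0 := by
  have hΦ : aeval C (cyclotomic n ℝ) = 0 := hC ▸ aeval_cyclotomic_map_cyclotomicCompanion n
  have hCn : C ^ n = 1 := pow_eq_one_of_aeval_cyclotomic hΦ
  change Θ = θ • cyclicSkew C n at hΘ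
  subst hΘ
  refine ⟨by rw [transpose_smul, cyclicSkew_transpose, smul_neg],
    by rw [Matrix.mul_smul, Matrix.smul_mul, transpose_mul_cyclicSkew_mul hCn], fun x hx => ?_⟩
  have hunit : IsUnit (cyclicSkew C n) := by
    refine isUnit_cyclicSkew hCn (by omega) ?_
    simpa using isUnit_aeval_of_isCoprime hΦ
      (isCoprime_cyclotomic_one_sub_X_sq (K := ℝ) (by omega) (by omega))
  have hentry (i) : (cyclicSkew C n *ᵥ fun j => (x j : ℝ)) i =
      ((cyclicSkew (cyclotomicCompanion n) n *ᵥ x) i : ℝ) := by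
    have h := RingHom.map_mulVec (Int.castRingHom ℝ) (cyclicSkew (cyclotomicCompanion n) n) x i
    rw [map_cyclicSkew] at h
    rw [hC]
    exact h.symm
  have hzero : cyclicSkew (cyclotomicCompanion n) n *ᵥ x = 0 := by
    ext i
    obtain ⟨m, hm⟩ := hx i
    rw [smul_mulVec, Pi.smul_apply, smul_eq_mul, hentry] at hm
    exact intCast_eq_zero_of_irrational_mul hθ hm
  have hreal : cyclicSkew C n *ᵥ (fun j => (x j : ℝ)) = cyclicSkew C n *ᵥ 0 := by
    ext i
    simp [hentry, hzero]
  ext i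
  simpa using congrFun (mulVec_injective_iff_isUnit.mpr hunit hreal) i
end

section
/- Let d ≥ 3, let C ∈ GL_d(ℤ) be the companion matrix of a monic degree-d polynomial, and let Θ = (θ_{ij}) be a real skew-symmetric d × d matrix with C^t Θ C = Θ. Then Θ is constant along diagonals: θ_{ij} depends only on j - i, i.e., there exist θ_0, ..., θ_{d-2} ∈ ℝ with θ_{i,i+k} = θ_{k-1} for all 1 ≤ i < i + k ≤ d. -/
/-!
The first `d - 1` columns of a companion matrix are the standard basis vectors `e₂, …, e_d`,
so the `(i, j)` entry of `Cᵀ Θ C` is `Θ (i + 1) (j + 1)` whenever `i, j < d - 1`. Invariance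
`Cᵀ Θ C = Θ` therefore says that `Θ` is unchanged by shifting both indices, which makes it
constant along diagonals.
-/

open Matrix

theorem companionMatrix_apply_castSucc {n : ℕ} (p : Polynomial ℤ) (l : Fin (n + 1))
    (j : Fin n) : companionMatrix (n + 1) p l j.castSucc = if l = j.succ then 1 else 0 := by
  have hj : (j : ℕ) ≠ n := j.isLt.ne
  simp [companionMatrix, hj, Fin.ext_iff]

namespace Matrix

theorem succ_succ_eq_of_transpose_mul_mul_eq {R : Type*} [NonAssocSemiring R] {n : ℕ}
    {C Θ : Matrix (Fin (n + 1)) (Fin (n + 1)) R}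
    (hC : ∀ l (j : Fin n), C l j.castSucc = if l = j.succ then 1 else 0)
    (h : Cᵀ * Θ * C = Θ) (i j : Fin n) : Θ i.succ j.succ = Θ i.castSucc j.castSucc := by
  conv_rhs => rw [← h]
  simp [mul_apply, hC]

theorem apply_eq_apply_zero_sub {α : Type*} {n : ℕ} {Θ : Matrix (Fin (n + 1)) (Fin (n + 1)) α}
    (hΘ : ∀ i j : Fin n, Θ i.succ j.succ = Θ i.castSucc j.castSucc)
    (i j : Fin (n + 1)) (hij : i ≤ j) : Θ i j = Θ 0 (Fin.ofNat (n + 1) (j - i)) := by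
  induction i using Fin.induction generalizing j with
  | zero => simp
  | succ i ih =>
    obtain ⟨j, rfl⟩ := Fin.exists_succ_eq.mpr (ne_of_gt (lt_of_lt_of_le (Fin.succ_pos i) hij))
    rw [hΘ, ih _ (by simpa using hij)]
    simp

end Matrix

theorem stmt_13_general (d : ℕ) (p : Polynomial ℤ)
    (C : Matrix (Fin d) (Fin d) ℝ)
    (hC : C = (companionMatrix d p).map (Int.cast : ℤ → ℝ))
    (Θ : Matrix (Fin d) (Fin d) ℝ)
    (hinv : Cᵀ * Θ * C = Θ) :
    ∃ θf : ℕ → ℝ, ∀ i j : Fin d, (i : ℕ) < (j : ℕ) →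
      Θ i j = θf ((j : ℕ) - (i : ℕ) - 1) := by
  cases d with
  | zero => exact ⟨0, fun i => i.elim0⟩
  | succ n =>
    have hshift := succ_succ_eq_of_transpose_mul_mul_eq (fun l j => by
      simp [hC, companionMatrix_apply_castSucc, apply_ite]) hinv
    refine ⟨fun k => Θ 0 (Fin.ofNat (n + 1) (k + 1)), fun i j hij => ?_⟩
    rw [apply_eq_apply_zero_sub hshift i j hij.le]
    congr 2
    omega

/-- If `d ≥ 3`, `C ∈ GL_d(ℤ)` is the companion matrix of a monic degree-`d`
polynomial and `Θ` is a real skew-symmetric matrix with `Cᵗ Θ C = Θ`, then `Θ`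
is constant along diagonals: there are `θ_0, …, θ_{d-2}` with
`Θ_{i, i+k} = θ_{k-1}`. -/
theorem stmt_13 (d : ℕ) (hd : 3 ≤ d) (p : Polynomial ℤ) (hm : p.Monic)
    (hdeg : p.natDegree = d) (hunit : IsUnit (companionMatrix d p).det)
    (C : Matrix (Fin d) (Fin d) ℝ)
    (hC : C = (companionMatrix d p).map (Int.cast : ℤ → ℝ))
    (Θ : Matrix (Fin d) (Fin d) ℝ) (hskew : Θᵀ = -Θ)
    (hinv : Cᵀ * Θ * C = Θ) :
    ∃ θf : ℕ → ℝ, ∀ i j : Fin d, (i : ℕ) < (j : ℕ) →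
      Θ i j = θf ((j : ℕ) - (i : ℕ) - 1) :=
  stmt_13_general d p C hC Θ hinv
end

section
/- Every real skew-symmetric 3 × 3 matrix with a zero row (equivalently, a zero column) is degenerate: if the i-th row of Θ is zero, then Θ e_i = 0 ∈ ℤ^3, so the nonzero integer vector e_i witnesses degeneracy. Consequently, for each matrix A of finite order in GL_3(ℤ) other than -I_3 from Tahara's list (e.g., A = diag(-1,1,1), or the order-3 matrix with rows (1,0,0),(0,0,-1),(0,1,-1)), every Θ with A^t Θ A = Θ is degenerate. -/
/-!
Conjugation by `diagonal d` multiplies `θᵢⱼ` by `dᵢ dⱼ`, so for `d = (-1, 1, 1)` it negates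
`θ₁₂, θ₁₃`, which therefore vanish; with `θ₁₁ = 0` from skew-symmetry the first row is zero.
A skew-symmetric matrix with zero `i`-th row has zero `i`-th column, so `Θ eᵢ = 0` and the
integer vector `eᵢ` witnesses degeneracy.
-/

open Matrix

def Matrix.IsDegenerate {n : Type*} [Fintype n] (Θ : Matrix n n ℝ) : Prop :=
  ∃ x : n → ℤ, x ≠ 0 ∧ ∀ k, ∃ m : ℤ, Θ.mulVec (fun j => (x j : ℝ)) k = (m : ℝ)

section Skew

variable {n R : Type*} [Ring R] {Θ : Matrix n n R}

lemma apply_eq_neg_apply_of_transpose_eq_neg (hskew : Θᵀ = -Θ) (i j : n) :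
    Θ j i = -Θ i j :=
  congrFun (congrFun hskew i) j

lemma apply_self_eq_zero_of_transpose_eq_neg [IsAddTorsionFree R] (hskew : Θᵀ = -Θ) (i : n) :
    Θ i i = 0 :=
  self_eq_neg.mp (apply_eq_neg_apply_of_transpose_eq_neg hskew i i)

lemma mulVec_single_one_eq_zero_of_transpose_eq_neg [Fintype n] [DecidableEq n]
    (hskew : Θᵀ = -Θ) {i : n} (hrow : ∀ j, Θ i j = 0) : Θ *ᵥ Pi.single i 1 = 0 := by
  ext k
  rw [mulVec_single_one, col_apply, apply_eq_neg_apply_of_transpose_eq_neg hskew, hrow, neg_zero,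
    Pi.zero_apply]

end Skew

lemma apply_eq_zero_of_diagonal_conj_eq {n R : Type*} [Fintype n] [DecidableEq n] [CommRing R]
    [IsAddTorsionFree R] {Θ : Matrix n n R} {d : n → R} (hconj : (diagonal d)ᵀ * Θ * diagonal d = Θ)
    {i j : n} (hd : d i * d j = -1) : Θ i j = 0 := by
  have h := congrFun (congrFun hconj i) j
  rw [diagonal_transpose, mul_diagonal, diagonal_mul] at h
  exact self_eq_neg.mp (by linear_combination Θ i j * hd - h)

lemma isDegenerate_of_mulVec_single_eq_zero {n : Type*} [Fintype n] [DecidableEq n]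
    {Θ : Matrix n n ℝ} {i : n} (h : Θ *ᵥ Pi.single i 1 = 0) : Θ.IsDegenerate := by
  refine ⟨Pi.single i 1, Pi.single_ne_zero_iff.mpr one_ne_zero, fun k => ⟨0, ?_⟩⟩
  have hcast : (fun j => ((Pi.single i 1 : n → ℤ) j : ℝ)) = Pi.single i 1 := funext fun j => by
    simpa using Pi.apply_single (fun _ => ((↑) : ℤ → ℝ)) (fun _ => Int.cast_zero) i 1 j
  simp [hcast, h]

lemma signFlip_eq_diagonal :
    !![(-1:ℝ),0,0; 0,1,0; 0,0,1] = diagonal ![-1, 1, 1] := by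
  ext i j
  fin_cases i <;> fin_cases j <;> simp

/-- (a) Every real skew-symmetric `3 × 3` matrix with a zero row is degenerate:
`Θ eᵢ = 0`, so `eᵢ` witnesses degeneracy.  (b) Consequently, for
`A = diag(-1, 1, 1)`, every skew-symmetric `Θ` with `Aᵗ Θ A = Θ` satisfies
`θ₁₂ = θ₁₃ = 0`, hence `Θ e₁ = 0` and `Θ` is degenerate. -/
theorem stmt_17 :
    (∀ Θ : Matrix (Fin 3) (Fin 3) ℝ, Θᵀ = -Θ →
      ∀ i : Fin 3, (∀ j, Θ i j = 0) →
        Θ.mulVec (Pi.single i 1) = 0 ∧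
        ∃ x : Fin 3 → ℤ, x ≠ 0 ∧
          ∀ k, ∃ m : ℤ, Θ.mulVec (fun j => (x j : ℝ)) k = (m : ℝ)) ∧
    (∀ Θ : Matrix (Fin 3) (Fin 3) ℝ, Θᵀ = -Θ →
      (!![(-1:ℝ),0,0; 0,1,0; 0,0,1])ᵀ * Θ * !![(-1:ℝ),0,0; 0,1,0; 0,0,1] = Θ →
        Θ 0 1 = 0 ∧ Θ 0 2 = 0 ∧ Θ.mulVec (Pi.single 0 1) = 0 ∧
        ∃ x : Fin 3 → ℤ, x ≠ 0 ∧
          ∀ k, ∃ m : ℤ, Θ.mulVec (fun j => (x j : ℝ)) k = (m : ℝ)) := by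
  refine ⟨fun Θ hskew i hrow => ?_, fun Θ hskew hconj => ?_⟩
  · have h := mulVec_single_one_eq_zero_of_transpose_eq_neg hskew hrow
    exact ⟨h, isDegenerate_of_mulVec_single_eq_zero h⟩
  · rw [signFlip_eq_diagonal] at hconj
    have h01 : Θ 0 1 = 0 := apply_eq_zero_of_diagonal_conj_eq hconj (by simp)
    have h02 : Θ 0 2 = 0 := apply_eq_zero_of_diagonal_conj_eq hconj (by simp)
    have hrow : ∀ j, Θ 0 j = 0 := by
      intro j
      fin_cases j
      exacts [apply_self_eq_zero_of_transpose_eq_neg hskew 0, h01, h02]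
    have h := mulVec_single_one_eq_zero_of_transpose_eq_neg hskew hrow
    exact ⟨h01, h02, h, isDegenerate_of_mulVec_single_eq_zero h⟩
end
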